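/- Let 𝕌 be a subfield of ℝ, n ≥ 2, and let P = (p_ij) be an n×n positive stochastic matrix with entries in 𝕌. If max_{i,j} p_ij − min_{i,j} p_ij < 1/n, then P is similar over 𝕌 to a positive doubly stochastic matrix Q and is strong shift equivalent over 𝕌₊ to Q through a chain consisting entirely of n×n matrices. -/

import Mathlib

/-!
Adding to every row of `P` the vector `colCorrection P = (𝟙ᵀ - 𝟙ᵀP)/n` gives a matrix `Q` with
row and column sums `1`, and the gap hypothesis keeps `Q` positive. With
`E v = idAddRows v = I + 𝟙vᵀ`, one has `Q = E u · P · E (-u)` whenever `∑ u = 0` and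
`u (P - I) = colCorrection P`. Such a `u` over `𝕌` is `x / ∑ x - 𝟙/n` for a left fixed vector `x`
of `P` over `𝕌`; here `∑ x ≠ 0` because every entry of `P` lies within `1/n` of `1/n`.

Since `∑ u = 0`, `t ↦ E (t u)` is a one-parameter group, and conjugating `P` by `E (t u)` runs
along the segment from `P` to `Q`, which stays positive. A short step `E (h u)` factors as
`E a · (E b)⁻¹` with `a = h u⁺`, `b = h u⁻` nonnegative, and conjugating a positive
stochastic `A` by `E v`, `v ≥ 0` small, is an elementary strong shift equivalence over `𝕌₊`:
`A = (A (E v)⁻¹) · E v` with both factors nonnegative.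
-/

open Matrix BigOperators

/-- Elementary strong shift equivalence between `n × n` real matrices, with all entries of the
connecting matrices lying in the set `S ⊆ ℝ`. -/
def ESSEn (S : Set ℝ) {n : ℕ} (A B : Matrix (Fin n) (Fin n) ℝ) : Prop :=
  ∃ U V : Matrix (Fin n) (Fin n) ℝ,
    (∀ i j, U i j ∈ S) ∧ (∀ i j, V i j ∈ S) ∧ A = U * V ∧ B = V * U

/-- Strong shift equivalence through matrices of the same size `n`: a finite chain of
elementary strong shift equivalences, all between `n × n` matrices. -/
def SSEn (S : Set ℝ) {n : ℕ} (A B : Matrix (Fin n) (Fin n) ℝ) : Prop :=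
  Relation.ReflTransGen (ESSEn S) A B

/-- `A` and `B` are similar via a conjugating matrix invertible over `U ⊆ ℝ`. -/
def SimilarOver (U : Set ℝ) {n : ℕ} (A B : Matrix (Fin n) (Fin n) ℝ) : Prop :=
  ∃ M : Matrix (Fin n) (Fin n) ℝ, IsUnit M ∧ (∀ i j, M i j ∈ U) ∧
    (∀ i j, M⁻¹ i j ∈ U) ∧ B = M * A * M⁻¹

open Finset

section Averaging

variable {ι : Type*} [Fintype ι] [Nonempty ι]

lemma sum_inv_card : ∑ _ : ι, (Fintype.card ι : ℝ)⁻¹ = 1 := by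
  simp [Fintype.card_ne_zero]

lemma abs_sub_inv_card_lt {x : ι → ℝ} (hsum : ∑ j, x j = 1)
    (hgap : ∀ j j', x j - x j' < (Fintype.card ι : ℝ)⁻¹) (j : ι) :
    |x j - (Fintype.card ι : ℝ)⁻¹| < (Fintype.card ι : ℝ)⁻¹ := by
  obtain ⟨k, -, hk⟩ := exists_le_of_sum_le univ_nonempty
    (f := x) (g := fun _ => (Fintype.card ι : ℝ)⁻¹) (by rw [hsum, sum_inv_card])
  obtain ⟨k', -, hk'⟩ := exists_le_of_sum_le univ_nonempty
    (f := fun _ => (Fintype.card ι : ℝ)⁻¹) (g := x) (by rw [hsum, sum_inv_card])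
  rw [abs_sub_lt_iff]
  constructor <;> linarith [hgap j k, hgap k' j]

end Averaging

lemma Finite.exists_pos_forall_le {α : Type*} [Finite α] {f : α → ℝ} (hf : ∀ a, 0 < f a) :
    ∃ μ > 0, ∀ a, μ ≤ f a := by
  cases isEmpty_or_nonempty α
  · exact ⟨1, one_pos, isEmptyElim⟩
  · obtain ⟨a, ha⟩ := Finite.exists_min f
    exact ⟨f a, hf a, ha⟩

namespace Matrix

variable {ι R : Type*} [Fintype ι]

section RowSums

variable [CommRing R]

lemma sum_vecMul_of_mulVec_one {A : Matrix ι ι R} (hA : A *ᵥ 1 = 1) (x : ι → R) :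
    ∑ j, (x ᵥ* A) j = ∑ i, x i := by
  simpa [hA, dotProduct_one] using (dotProduct_mulVec x A 1).symm

lemma add_vecMulVec_mulVec_one {A : Matrix ι ι R} (hA : A *ᵥ 1 = 1) {v : ι → R}
    (hv : ∑ j, v j = 0) : (A + vecMulVec 1 v) *ᵥ 1 = 1 := by
  rw [add_mulVec, hA, vecMulVec_mulVec, dotProduct_one, hv]
  simp

lemma mulVec_one_eq_one_iff {M : Matrix ι ι R} : M *ᵥ 1 = 1 ↔ ∀ i, ∑ j, M i j = 1 := by
  simp [funext_iff, mulVec, dotProduct]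

lemma one_vecMul_eq_one_iff {M : Matrix ι ι R} : 1 ᵥ* M = 1 ↔ ∀ j, ∑ i, M i j = 1 := by
  simp [funext_iff, vecMul, dotProduct]

end RowSums

section IdAddRows

variable [DecidableEq ι] [CommRing R]

def idAddRows (v : ι → R) : Matrix ι ι R := 1 + vecMulVec 1 v

omit [Fintype ι] in
lemma idAddRows_apply (v : ι → R) (i j : ι) :
    idAddRows v i j = (1 : Matrix ι ι R) i j + v j := by
  simp [idAddRows]

omit [Fintype ι] in
@[simp]
lemma idAddRows_zero : idAddRows (0 : ι → R) = 1 := by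
  simp [idAddRows]

lemma idAddRows_mem_matrix (S : Subring R) {v : ι → R} (hv : ∀ j, v j ∈ S) :
    idAddRows v ∈ S.matrix :=
  fun i j => by rw [idAddRows_apply]; exact S.add_mem (S.matrix.one_mem i j) (hv j)

lemma idAddRows_mul_mul_idAddRows_mem_matrix (S : Subring R) {A : Matrix ι ι R}
    (hA : A ∈ S.matrix) {x y : ι → R} (hx : ∀ j, x j ∈ S) (hy : ∀ j, y j ∈ S) :
    idAddRows x * A * idAddRows y ∈ S.matrix :=
  mul_mem (mul_mem (idAddRows_mem_matrix S hx) hA) (idAddRows_mem_matrix S hy)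

lemma mul_idAddRows {A : Matrix ι ι R} (hA : A *ᵥ 1 = 1) (v : ι → R) :
    A * idAddRows v = A + vecMulVec 1 v := by
  rw [idAddRows, mul_add, mul_one, mul_vecMulVec, hA]

lemma idAddRows_mul_mul_idAddRows {A : Matrix ι ι R} (hA : A *ᵥ 1 = 1) (x y : ι → R) :
    idAddRows x * A * idAddRows y = A + vecMulVec 1 (x ᵥ* A + (1 + ∑ i, x i) • y) := by
  have hxA : (x ᵥ* A) ⬝ᵥ 1 = ∑ i, x i := by
    rw [dotProduct_one, sum_vecMul_of_mulVec_one hA]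
  simp only [idAddRows, add_mul, mul_add, one_mul, mul_one, vecMulVec_mul, mul_vecMulVec, hA,
    vecMulVec_mulVec, hxA]
  ext i j
  simp
  ring

lemma idAddRows_mul_idAddRows (x y : ι → R) :
    idAddRows x * idAddRows y = idAddRows (x + (1 + ∑ i, x i) • y) := by
  simpa [idAddRows] using idAddRows_mul_mul_idAddRows (one_mulVec 1) x y

lemma idAddRows_mul_mul_idAddRows_neg {A : Matrix ι ι R} (hA : A *ᵥ 1 = 1) {u : ι → R}
    (hu : ∑ i, u i = 0) :
    idAddRows u * A * idAddRows (-u) = A + vecMulVec 1 (u ᵥ* A - u) := by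
  rw [idAddRows_mul_mul_idAddRows hA, hu, add_zero, one_smul, sub_eq_add_neg]

lemma idAddRows_mul_mul_idAddRows_neg_mulVec_one {A : Matrix ι ι R} (hA : A *ᵥ 1 = 1)
    {u : ι → R} (hu : ∑ i, u i = 0) : (idAddRows u * A * idAddRows (-u)) *ᵥ 1 = 1 := by
  rw [idAddRows_mul_mul_idAddRows_neg hA hu]
  refine add_vecMulVec_mulVec_one hA ?_
  simp [sum_sub_distrib, sum_vecMul_of_mulVec_one hA, hu]

lemma idAddRows_smul_mul_idAddRows_smul {u : ι → R} (hu : ∑ i, u i = 0) (s t : R) :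
    idAddRows (s • u) * idAddRows (t • u) = idAddRows ((s + t) • u) := by
  simp [idAddRows_mul_idAddRows, ← mul_sum, hu, add_smul]

lemma idAddRows_smul_conj_conj {u : ι → R} (hu : ∑ i, u i = 0) (s t : R) (A : Matrix ι ι R) :
    idAddRows (s • u) * (idAddRows (t • u) * A * idAddRows (-(t • u))) * idAddRows (-(s • u)) =
      idAddRows ((s + t) • u) * A * idAddRows (-((s + t) • u)) := by
  simp only [← neg_smul, Matrix.mul_assoc]
  rw [← Matrix.mul_assoc (idAddRows (s • u)), idAddRows_smul_mul_idAddRows_smul hu,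
    idAddRows_smul_mul_idAddRows_smul hu, show -t + -s = -(s + t) by ring]

end IdAddRows

section Field

variable {K : Type*} [DecidableEq ι] [Field K]

lemma idAddRows_mul_idAddRows_neg_inv_smul {x y : ι → K}
    (hxy : ∑ i, x i = ∑ i, y i) (hy : 1 + ∑ i, y i ≠ 0) :
    idAddRows x * idAddRows (-(1 + ∑ i, y i)⁻¹ • y) = idAddRows (x - y) := by
  rw [idAddRows_mul_idAddRows, hxy, smul_smul, mul_neg, mul_inv_cancel₀ hy, neg_one_smul,
    sub_eq_add_neg]

lemma idAddRows_neg_inv_smul_mul_mul_idAddRows {A : Matrix ι ι K} (hA : A *ᵥ 1 = 1)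
    {b : ι → K} (hb : 1 + ∑ i, b i ≠ 0) :
    idAddRows (-(1 + ∑ i, b i)⁻¹ • b) * A * idAddRows b =
      A + vecMulVec 1 ((1 + ∑ i, b i)⁻¹ • (b - b ᵥ* A)) := by
  rw [idAddRows_mul_mul_idAddRows hA]
  congr 2
  ext j
  simp [← mul_sum, neg_vecMul, smul_vecMul]
  field_simp
  ring

lemma exists_vecMul_eq_self_of_mulVec_one [Nonempty ι] {A : Matrix ι ι K} (hA : A *ᵥ 1 = 1) :
    ∃ x ≠ 0, x ᵥ* A = x := by
  have hdet : (A - 1).det = 0 := by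
    rw [← exists_mulVec_eq_zero_iff]
    exact ⟨1, one_ne_zero, by rw [sub_mulVec, hA, one_mulVec, sub_self]⟩
  obtain ⟨x, hx, hxA⟩ := exists_vecMul_eq_zero_iff.mpr hdet
  exact ⟨x, hx, by rwa [vecMul_sub, vecMul_one, sub_eq_zero] at hxA⟩

lemma exists_vecMul_eq_self_of_mem_subfield [Nonempty ι] (𝕌 : Subfield K) {A : Matrix ι ι K}
    (hA𝕌 : ∀ i j, A i j ∈ 𝕌) (hA : A *ᵥ 1 = 1) :
    ∃ x ≠ 0, (∀ i, x i ∈ 𝕌) ∧ x ᵥ* A = x := by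
  set A' : Matrix ι ι 𝕌 := of fun i j => ⟨A i j, hA𝕌 i j⟩
  have hmap : A'.map 𝕌.subtype = A := rfl
  have hA' : A' *ᵥ 1 = 1 := funext fun i => Subtype.ext <| by
    have h := RingHom.map_mulVec 𝕌.subtype A' 1 i
    rw [hmap] at h
    simpa [hA] using h
  obtain ⟨x, hx, hxA⟩ := exists_vecMul_eq_self_of_mulVec_one hA'
  refine ⟨fun i => x i, fun h => hx (funext fun i => Subtype.ext (congrFun h i)), fun i => (x i).2,
    funext fun j => ?_⟩
  have h := RingHom.map_vecMul 𝕌.subtype A' x j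
  rw [hmap, hxA] at h
  exact h.symm

end Field

lemma sum_add_le_mul_idAddRows_conj_apply [DecidableEq ι] {A : Matrix ι ι ℝ} (hA : A *ᵥ 1 = 1)
    {b : ι → ℝ} (hb : 0 ≤ b) (hAb : ∀ i j, 2 * ∑ k, b k ≤ A i j) (i j : ι) :
    ∑ k, b k + b j ≤
      (1 + ∑ k, b k) * (idAddRows (-(1 + ∑ k, b k)⁻¹ • b) * A * idAddRows b) i j := by
  have hσ : 0 ≤ ∑ k, b k := sum_nonneg fun k _ => hb k
  have hA1 : ∀ i j, A i j ≤ 1 := fun i j =>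
    le_one_of_mem_rowStochastic ⟨fun i j => by linarith [hAb i j], hA⟩
  have hbA : (b ᵥ* A) j ≤ ∑ k, b k :=
    sum_le_sum fun k _ => mul_le_of_le_one_right (hb k) (hA1 k j)
  rw [idAddRows_neg_inv_smul_mul_mul_idAddRows hA (by positivity)]
  simp only [Matrix.add_apply, vecMulVec_apply, Pi.one_apply, one_mul, Pi.smul_apply,
    Pi.sub_apply, smul_eq_mul]
  rw [mul_add, ← mul_assoc, mul_inv_cancel₀ (by positivity), one_mul]
  nlinarith [hAb i j]

lemma sum_ne_zero_of_vecMul_eq_self {A : Matrix ι ι ℝ} {c : ℝ}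
    (hA : ∀ i j, |A i j - c| < (Fintype.card ι : ℝ)⁻¹) {x : ι → ℝ} (hx0 : x ≠ 0)
    (hx : x ᵥ* A = x) : ∑ i, x i ≠ 0 := by
  intro hsum
  obtain ⟨i₀, hi₀⟩ := Function.ne_iff.mp hx0
  have : Nonempty ι := ⟨i₀⟩
  obtain ⟨j, -, hj⟩ := exists_max_image univ (fun i => |x i|) univ_nonempty
  have hxj : 0 < |x j| := (abs_pos.2 hi₀).trans_le (hj i₀ (mem_univ _))
  have hxj_eq : x j = ∑ i, x i * (A i j - c) := by
    simp only [mul_sub, sum_sub_distrib, ← sum_mul, hsum, zero_mul, sub_zero]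
    exact (congrFun hx j).symm
  have : |x j| < |x j| := calc
    |x j| ≤ ∑ i, |x i| * |A i j - c| := by
      rw [hxj_eq]
      simpa only [abs_mul] using abs_sum_le_sum_abs (fun i => x i * (A i j - c)) univ
    _ < ∑ _ : ι, |x j| * (Fintype.card ι : ℝ)⁻¹ :=
      sum_lt_sum_of_nonempty univ_nonempty fun i _ =>
        (mul_le_mul_of_nonneg_right (hj i (mem_univ i)) (abs_nonneg _)).trans_lt
          (mul_lt_mul_of_pos_left (hA i j) hxj)
    _ = |x j| := by rw [← mul_sum, sum_inv_card, mul_one]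
  exact lt_irrefl _ this

noncomputable def colCorrection (P : Matrix ι ι ℝ) : ι → ℝ :=
  (Fintype.card ι : ℝ)⁻¹ • (1 - 1 ᵥ* P)

lemma sum_colCorrection {P : Matrix ι ι ℝ} (hP : P *ᵥ 1 = 1) : ∑ j, colCorrection P j = 0 := by
  simp [colCorrection, ← mul_sum, sum_sub_distrib, sum_vecMul_of_mulVec_one hP]

lemma one_vecMul_add_colCorrection [Nonempty ι] (P : Matrix ι ι ℝ) :
    1 ᵥ* (P + vecMulVec 1 (colCorrection P)) = 1 := by
  rw [vecMul_add, vecMul_vecMulVec, dotProduct_one]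
  ext j
  simp [colCorrection, Fintype.card_ne_zero]

lemma add_colCorrection_pos [Nonempty ι] {P : Matrix ι ι ℝ}
    (hgap : ∀ i i' j, P i' j - P i j < (Fintype.card ι : ℝ)⁻¹) (i j : ι) :
    0 < (P + vecMulVec 1 (colCorrection P) : Matrix ι ι ℝ) i j := by
  have hn : (0 : ℝ) < Fintype.card ι := by exact_mod_cast Fintype.card_pos
  have h := sum_lt_sum_of_nonempty univ_nonempty fun i' (_ : i' ∈ univ) =>
    (show P i' j < P i j + (Fintype.card ι : ℝ)⁻¹ by linarith [hgap i i' j])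
  rw [sum_const, card_univ, nsmul_eq_mul, mul_add, mul_inv_cancel₀ hn.ne'] at h
  have : (P + vecMulVec 1 (colCorrection P) : Matrix ι ι ℝ) i j
      = (Fintype.card ι * P i j + 1 - ∑ i', P i' j) / Fintype.card ι := by
    simp [colCorrection, vecMul, dotProduct]
    field_simp
    ring
  rw [this]
  exact div_pos (by linarith) hn

lemma exists_vecMul_sub_eq_colCorrection [DecidableEq ι] [Nonempty ι] (𝕌 : Subfield ℝ)
    {P : Matrix ι ι ℝ} (hP𝕌 : ∀ i j, P i j ∈ 𝕌) (hP : P *ᵥ 1 = 1)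
    (hgap : ∀ i j j', P i j - P i j' < (Fintype.card ι : ℝ)⁻¹) :
    ∃ u : ι → ℝ, (∀ j, u j ∈ 𝕌) ∧ ∑ j, u j = 0 ∧ u ᵥ* P - u = colCorrection P := by
  obtain ⟨x, hx0, hx𝕌, hx⟩ := exists_vecMul_eq_self_of_mem_subfield 𝕌 hP𝕌 hP
  have hT := sum_ne_zero_of_vecMul_eq_self
    (fun i j => abs_sub_inv_card_lt (mulVec_one_eq_one_iff.mp hP i) (hgap i) j) hx0 hx
  refine ⟨(∑ i, x i)⁻¹ • x - (Fintype.card ι : ℝ)⁻¹ • 1, fun j => ?_, ?_, ?_⟩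
  · exact 𝕌.sub_mem (𝕌.mul_mem (𝕌.inv_mem (𝕌.sum_mem fun i _ => hx𝕌 i)) (hx𝕌 j))
      (𝕌.mul_mem (𝕌.inv_mem (natCast_mem 𝕌 _)) 𝕌.one_mem)
  · simp [sum_sub_distrib, ← mul_sum, hT]
  · ext j
    simp [sub_vecMul, smul_vecMul, hx, colCorrection]
    ring

end Matrix

section ShiftEquivalence

variable {n : ℕ}

lemma ESSEn.symm {S : Set ℝ} {A B : Matrix (Fin n) (Fin n) ℝ} (h : ESSEn S A B) :
    ESSEn S B A := by
  obtain ⟨U, V, hU, hV, rfl, rfl⟩ := h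
  exact ⟨V, U, hV, hU, rfl, rfl⟩

lemma ESSEn.conj_of_mul_eq_one {S : Set ℝ} {A X Y : Matrix (Fin n) (Fin n) ℝ} (hXY : X * Y = 1)
    (hX : ∀ i j, X i j ∈ S) (hAY : ∀ i j, (A * Y) i j ∈ S) : ESSEn S A (X * A * Y) :=
  ⟨A * Y, X, hAY, hX, by rw [Matrix.mul_assoc, mul_eq_one_comm.mp hXY, Matrix.mul_one],
    by rw [Matrix.mul_assoc]⟩

lemma ESSEn.idAddRows_conj (𝕌 : Subfield ℝ) {A : Matrix (Fin n) (Fin n) ℝ} {v : Fin n → ℝ}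
    (hA𝕌 : ∀ i j, A i j ∈ 𝕌) (hA : A *ᵥ 1 = 1) (hv𝕌 : ∀ j, v j ∈ 𝕌) (hv : 0 ≤ v)
    (hvA : ∀ i j, v j ≤ (1 + ∑ k, v k) * A i j) :
    ESSEn {x | x ∈ 𝕌 ∧ 0 ≤ x} A (idAddRows v * A * idAddRows (-(1 + ∑ k, v k)⁻¹ • v)) := by
  have hσ : 0 < 1 + ∑ k, v k := by
    have := sum_nonneg fun k (_ : k ∈ univ) => hv k
    linarith
  have hAY : ∀ i j, (A * idAddRows (-(1 + ∑ k, v k)⁻¹ • v)) i j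
      = A i j - (1 + ∑ k, v k)⁻¹ * v j := fun i j => by
    simp [mul_idAddRows hA, sub_eq_add_neg]
  refine ESSEn.conj_of_mul_eq_one ?_ (fun i j => ⟨?_, ?_⟩) (fun i j => ⟨?_, ?_⟩)
  · rw [idAddRows_mul_idAddRows_neg_inv_smul rfl hσ.ne', sub_self, idAddRows_zero]
  · exact idAddRows_mem_matrix 𝕌.toSubring hv𝕌 i j
  · rw [idAddRows_apply, one_apply]
    exact add_nonneg (by split_ifs <;> norm_num) (hv j)
  · rw [hAY]
    exact 𝕌.sub_mem (hA𝕌 i j) (𝕌.mul_mem (𝕌.inv_mem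
      (𝕌.add_mem 𝕌.one_mem (𝕌.sum_mem fun k _ => hv𝕌 k))) (hv𝕌 j))
  · rw [hAY, sub_nonneg]
    exact (inv_mul_le_iff₀ hσ).2 (hvA i j)

lemma SSEn.idAddRows_sub_conj (𝕌 : Subfield ℝ) {A : Matrix (Fin n) (Fin n) ℝ}
    {a b : Fin n → ℝ} (hA𝕌 : ∀ i j, A i j ∈ 𝕌) (hA : A *ᵥ 1 = 1)
    (ha𝕌 : ∀ j, a j ∈ 𝕌) (hb𝕌 : ∀ j, b j ∈ 𝕌) (ha : 0 ≤ a) (hb : 0 ≤ b)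
    (hab : ∑ k, a k = ∑ k, b k) (hAb : ∀ i j, 2 * ∑ k, b k ≤ A i j) :
    SSEn {x | x ∈ 𝕌 ∧ 0 ≤ x} A (idAddRows (a - b) * A * idAddRows (b - a)) := by
  set σ := ∑ k, b k
  have hσ : 0 ≤ σ := sum_nonneg fun k _ => hb k
  have hσ1 : 1 + σ ≠ 0 := by positivity
  have hE : ∀ x y : Fin n → ℝ, ∑ k, x k = σ → ∑ k, y k = σ →
      idAddRows x * idAddRows (-(1 + σ)⁻¹ • y) = idAddRows (x - y) := fun x y hx hy => by
    rw [← hy]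
    exact idAddRows_mul_idAddRows_neg_inv_smul (hx.trans hy.symm) (hy ▸ hσ1)
  -- `C` is conjugate to `A` by `E b` and to the target by `E a`.
  set C := idAddRows (-(1 + σ)⁻¹ • b) * A * idAddRows b with hC
  have hC1 : C *ᵥ 1 = 1 := by
    rw [hC, idAddRows_neg_inv_smul_mul_mul_idAddRows hA hσ1]
    refine add_vecMulVec_mulVec_one hA ?_
    simp [← mul_sum, sum_sub_distrib, sum_vecMul_of_mulVec_one hA]
  have hC𝕌 : ∀ i j, C i j ∈ 𝕌 := idAddRows_mul_mul_idAddRows_mem_matrix 𝕌.toSubring hA𝕌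
    (fun j => 𝕌.mul_mem (𝕌.neg_mem (𝕌.inv_mem (𝕌.add_mem 𝕌.one_mem
      (𝕌.sum_mem fun k _ => hb𝕌 k)))) (hb𝕌 j)) hb𝕌
  have hCge : ∀ i j, σ + b j ≤ (1 + σ) * C i j :=
    sum_add_le_mul_idAddRows_conj_apply hA hb hAb
  have haσ : ∀ j, a j ≤ σ := fun j => hab ▸ single_le_sum (fun k _ => ha k) (mem_univ j)
  have hCA : idAddRows b * C * idAddRows (-(1 + σ)⁻¹ • b) = A := by
    rw [hC, ← Matrix.mul_assoc, ← Matrix.mul_assoc, hE b b rfl rfl, Matrix.mul_assoc,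
      hE b b rfl rfl, sub_self, idAddRows_zero, one_mul, mul_one]
  have hCB : idAddRows a * C * idAddRows (-(1 + σ)⁻¹ • a) =
      idAddRows (a - b) * A * idAddRows (b - a) := by
    rw [hC, ← Matrix.mul_assoc, ← Matrix.mul_assoc, hE a b hab rfl, Matrix.mul_assoc,
      hE b a rfl hab]
  have h1 : ESSEn _ C A := hCA ▸ ESSEn.idAddRows_conj 𝕌 hC𝕌 hC1 hb𝕌 hb fun i j =>
    (le_add_of_nonneg_left hσ).trans (hCge i j)
  have h2 : ESSEn _ C (idAddRows (a - b) * A * idAddRows (b - a)) :=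
    hCB ▸ hab ▸ ESSEn.idAddRows_conj 𝕌 hC𝕌 hC1 ha𝕌 ha fun i j =>
      hab ▸ (haσ j).trans ((le_add_of_nonneg_right (hb j)).trans (hCge i j))
  exact .head h1.symm (.single h2)

lemma SSEn.idAddRows_conj_of_two_mul_sum_abs_le (𝕌 : Subfield ℝ)
    {A : Matrix (Fin n) (Fin n) ℝ} {u : Fin n → ℝ} {μ : ℝ} (hA𝕌 : ∀ i j, A i j ∈ 𝕌)
    (hA : A *ᵥ 1 = 1) (hAμ : ∀ i j, μ ≤ A i j)
    (hu𝕌 : ∀ j, u j ∈ 𝕌) (hu : ∑ j, u j = 0) (hμ : 2 * ∑ j, |u j| ≤ μ) :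
    SSEn {x | x ∈ 𝕌 ∧ 0 ≤ x} A (idAddRows u * A * idAddRows (-u)) := by
  have hpos𝕌 : ∀ j, u⁺ j ∈ 𝕌 := fun j => by
    rw [Pi.posPart_apply, posPart_eq_ite]
    split_ifs
    exacts [hu𝕌 j, 𝕌.zero_mem]
  have hneg : u⁻ = u⁺ - u :=
    eq_sub_of_add_eq (sub_eq_iff_eq_add'.mp (posPart_sub_negPart u)).symm
  have hsum : ∑ k, u⁺ k = ∑ k, u⁻ k := by
    rw [hneg]
    simp only [Pi.sub_apply, sum_sub_distrib, hu, sub_zero]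
  have hAμ' : ∀ i j, 2 * ∑ k, u⁻ k ≤ A i j := fun i j => calc
    2 * ∑ k, u⁻ k ≤ 2 * ∑ k, |u k| := by
      gcongr with k
      rw [Pi.negPart_apply, negPart_eq_ite]
      split_ifs
      exacts [neg_le_abs _, abs_nonneg _]
    _ ≤ A i j := hμ.trans (hAμ i j)
  have h := SSEn.idAddRows_sub_conj 𝕌 hA𝕌 hA hpos𝕌
    (fun j => hneg ▸ 𝕌.sub_mem (hpos𝕌 j) (hu𝕌 j)) (posPart_nonneg u) (negPart_nonneg u) hsum hAμ'
  rwa [posPart_sub_negPart, ← neg_sub, posPart_sub_negPart] at h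

lemma le_idAddRows_smul_conj {A : Matrix (Fin n) (Fin n) ℝ} (hA : A *ᵥ 1 = 1) {u : Fin n → ℝ}
    (hu : ∑ j, u j = 0) {μ : ℝ} (hAμ : ∀ i j, μ ≤ A i j)
    (hBμ : ∀ i j, μ ≤ (idAddRows u * A * idAddRows (-u)) i j) {t : ℝ} (ht : t ∈ Set.Icc 0 1)
    (i j : Fin n) : μ ≤ (idAddRows (t • u) * A * idAddRows (-(t • u))) i j := by
  have hB := hBμ i j
  rw [idAddRows_mul_mul_idAddRows_neg hA hu] at hB
  rw [idAddRows_mul_mul_idAddRows_neg hA (by simp [← mul_sum, hu])]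
  simp only [Matrix.add_apply, vecMulVec_apply, Pi.one_apply, one_mul, Pi.sub_apply,
    smul_vecMul, Pi.smul_apply, smul_eq_mul] at hB ⊢
  nlinarith [hAμ i j, ht.1, ht.2]

theorem SSEn.idAddRows_conj_of_forall_le (𝕌 : Subfield ℝ) {A : Matrix (Fin n) (Fin n) ℝ}
    {u : Fin n → ℝ} {μ : ℝ} (hμ : 0 < μ) (hA𝕌 : ∀ i j, A i j ∈ 𝕌) (hA : A *ᵥ 1 = 1)
    (hu𝕌 : ∀ j, u j ∈ 𝕌) (hu : ∑ j, u j = 0) (hAμ : ∀ i j, μ ≤ A i j)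
    (hBμ : ∀ i j, μ ≤ (idAddRows u * A * idAddRows (-u)) i j) :
    SSEn {x | x ∈ 𝕌 ∧ 0 ≤ x} A (idAddRows u * A * idAddRows (-u)) := by
  obtain ⟨N, hN⟩ := exists_nat_gt ((2 * ∑ j, |u j|) / μ)
  have hN0 : (0 : ℝ) < N := lt_of_le_of_lt (by positivity) hN
  have htu : ∀ t : ℝ, ∑ j, (t • u) j = 0 := fun t => by simp [← mul_sum, hu]
  have htu𝕌 : ∀ t ∈ 𝕌, ∀ j, (t • u) j ∈ 𝕌 := fun t ht j => 𝕌.mul_mem ht (hu𝕌 j)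
  have hsmall : 2 * ∑ j, |((N : ℝ)⁻¹ • u) j| ≤ μ := by
    rw [div_lt_iff₀ hμ] at hN
    simp only [Pi.smul_apply, smul_eq_mul, abs_mul, ← mul_sum, abs_inv, Nat.abs_cast]
    rw [← mul_assoc, mul_comm 2, mul_assoc, inv_mul_le_iff₀ hN0]
    linarith
  have hreach : ∀ k ≤ N, SSEn {x | x ∈ 𝕌 ∧ 0 ≤ x} A
      (idAddRows (((k : ℝ) / N) • u) * A * idAddRows (-(((k : ℝ) / N) • u))) := by
    intro k
    induction k with
    | zero =>
      intro _
      simp only [Nat.cast_zero, zero_div, zero_smul, neg_zero, idAddRows_zero, one_mul, mul_one]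
      exact .refl
    | succ k ih =>
      intro hk
      set t : ℝ := k / N
      have ht𝕌 : t ∈ 𝕌 := 𝕌.div_mem (natCast_mem 𝕌 k) (natCast_mem 𝕌 N)
      have ht : t ∈ Set.Icc 0 1 :=
        ⟨by positivity, div_le_one_of_le₀ (by exact_mod_cast (by omega : k ≤ N)) hN0.le⟩
      have h := SSEn.idAddRows_conj_of_two_mul_sum_abs_le 𝕌 (u := (N : ℝ)⁻¹ • u)
        (idAddRows_mul_mul_idAddRows_mem_matrix 𝕌.toSubring (y := -(t • u)) hA𝕌 (htu𝕌 t ht𝕌)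
          fun j => 𝕌.neg_mem (htu𝕌 t ht𝕌 j))
        (idAddRows_mul_mul_idAddRows_neg_mulVec_one hA (htu t))
        (le_idAddRows_smul_conj hA hu hAμ hBμ ht)
        (htu𝕌 _ (𝕌.inv_mem (natCast_mem 𝕌 N))) (htu _) hsmall
      rw [idAddRows_smul_conj_conj hu, show (N : ℝ)⁻¹ + t = (k + 1 : ℕ) / N by
        simp only [t]; push_cast; ring] at h
      exact (ih (by omega)).trans h
  simpa [hN0.ne'] using hreach N le_rfl

theorem SSEn.idAddRows_conj_of_pos (𝕌 : Subfield ℝ) {A : Matrix (Fin n) (Fin n) ℝ}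
    {u : Fin n → ℝ} (hA𝕌 : ∀ i j, A i j ∈ 𝕌) (hA : A *ᵥ 1 = 1) (hApos : ∀ i j, 0 < A i j)
    (hu𝕌 : ∀ j, u j ∈ 𝕌) (hu : ∑ j, u j = 0)
    (hBpos : ∀ i j, 0 < (idAddRows u * A * idAddRows (-u)) i j) :
    SSEn {x | x ∈ 𝕌 ∧ 0 ≤ x} A (idAddRows u * A * idAddRows (-u)) := by
  obtain ⟨μ, hμ, hμAB⟩ := Finite.exists_pos_forall_le
    (f := fun p : Fin n × Fin n => min (A p.1 p.2) ((idAddRows u * A * idAddRows (-u)) p.1 p.2))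
    fun p => lt_min (hApos _ _) (hBpos _ _)
  exact SSEn.idAddRows_conj_of_forall_le 𝕌 hμ hA𝕌 hA hu𝕌 hu
    (fun i j => (hμAB (i, j)).trans (min_le_left _ _))
    (fun i j => (hμAB (i, j)).trans (min_le_right _ _))

lemma similarOver_idAddRows_conj (𝕌 : Subfield ℝ) (A : Matrix (Fin n) (Fin n) ℝ)
    {u : Fin n → ℝ} (hu𝕌 : ∀ j, u j ∈ 𝕌) (hu : ∑ j, u j = 0) :
    SimilarOver 𝕌 A (idAddRows u * A * idAddRows (-u)) := by
  have hinv : idAddRows u * idAddRows (-u) = 1 := by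
    simpa using idAddRows_smul_mul_idAddRows_smul hu 1 (-1)
  have hM : (idAddRows u)⁻¹ = idAddRows (-u) := inv_eq_right_inv hinv
  refine ⟨idAddRows u, isUnit_iff_exists.mpr ⟨_, hinv, mul_eq_one_comm.mp hinv⟩,
    idAddRows_mem_matrix 𝕌.toSubring hu𝕌, ?_, by rw [hM]⟩
  rw [hM]
  exact idAddRows_mem_matrix 𝕌.toSubring fun j => 𝕌.neg_mem (hu𝕌 j)

end ShiftEquivalence

/-- Let `𝕌` be a subfield of `ℝ`, `n ≥ 2`, and `P` an `n × n` positive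
stochastic matrix over `𝕌`. If the difference between the largest and the smallest entry of
`P` is less than `1/n` (equivalently, `P i j - P i' j' < 1/n` for all `i, j, i', j'`), then
`P` is similar over `𝕌` to a positive doubly stochastic matrix `Q` and strong shift
equivalent over `𝕌₊` to `Q` through `n × n` matrices. -/
theorem stmt6 (𝕌 : Subfield ℝ) {n : ℕ} (hn : 2 ≤ n)
    (P : Matrix (Fin n) (Fin n) ℝ) (hUP : ∀ i j, P i j ∈ 𝕌)
    (hpos : ∀ i j, 0 < P i j) (hrow : ∀ i, ∑ j, P i j = 1)
    (hgap : ∀ i j i' j', P i j - P i' j' < 1 / (n : ℝ)) :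
    ∃ Q : Matrix (Fin n) (Fin n) ℝ,
      (∀ i j, Q i j ∈ 𝕌) ∧ (∀ i j, 0 < Q i j) ∧
      (∀ i, ∑ j, Q i j = 1) ∧ (∀ j, ∑ i, Q i j = 1) ∧
      SimilarOver (𝕌 : Set ℝ) P Q ∧
      SSEn {x : ℝ | x ∈ 𝕌 ∧ 0 ≤ x} P Q := by
  have : Nonempty (Fin n) := ⟨⟨0, by omega⟩⟩
  replace hgap : ∀ i j i' j', P i j - P i' j' < (Fintype.card (Fin n) : ℝ)⁻¹ := by
    simpa [one_div] using hgap
  have hP : P *ᵥ 1 = 1 := mulVec_one_eq_one_iff.mpr hrow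
  obtain ⟨u, hu𝕌, hu, huP⟩ :=
    exists_vecMul_sub_eq_colCorrection 𝕌 hUP hP fun i j j' => hgap i j i j'
  have hQ : idAddRows u * P * idAddRows (-u) = P + vecMulVec 1 (colCorrection P) := by
    rw [idAddRows_mul_mul_idAddRows_neg hP hu, huP]
  have hQpos := add_colCorrection_pos fun i i' j => hgap i' j i j
  refine ⟨P + vecMulVec 1 (colCorrection P), ?_, hQpos,
    mulVec_one_eq_one_iff.mp (add_vecMulVec_mulVec_one hP (sum_colCorrection hP)),
    one_vecMul_eq_one_iff.mp (one_vecMul_add_colCorrection P), ?_, ?_⟩ <;> rw [← hQ]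
  · exact idAddRows_mul_mul_idAddRows_mem_matrix 𝕌.toSubring hUP hu𝕌 fun j => 𝕌.neg_mem (hu𝕌 j)
  · exact similarOver_idAddRows_conj 𝕌 P hu𝕌 hu
  · exact SSEn.idAddRows_conj_of_pos 𝕌 hUP hP hpos hu𝕌 hu (hQ ▸ hQpos)
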